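/- Validity of the unsolvability formula: for every 1 ≤ k ≤ n, the epistemic μ-calculus formula Φ_k = νZ.[OFUN ∧ VALID ∧ ⋀_{∅≠A⊆Π}(DEC_A ⇒ D_A(KNOW ∧ AGREE_k ∧ Z))] is valid in the product update model with factual change I[SA_k]^fc, i.e., I[SA_k]^fc, σ ⊨ Φ_k for every facet σ of I[SA_k]. -/

import Mathlib

/-! ## Epistemic μ-calculus: syntax and Kripke semantics -/

/-- Positive formulas of the epistemic μ-calculus: atoms, negated atoms,
propositional variables (indexed by `ℕ`), disjunction, conjunction,
distributed knowledge `D_A`, and greatest fixpoints `νZ.φ`. -/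
inductive Formula (AP Agent : Type) : Type
  | atom  : AP → Formula AP Agent
  | natom : AP → Formula AP Agent
  | var   : ℕ → Formula AP Agent
  | or    : Formula AP Agent → Formula AP Agent → Formula AP Agent
  | and   : Formula AP Agent → Formula AP Agent → Formula AP Agent
  | know  : Set Agent → Formula AP Agent → Formula AP Agent
  | nu    : ℕ → Formula AP Agent → Formula AP Agent

/-- A Kripke model: indistinguishability relations and a labeling. -/
structure KModel (Agent AP S : Type) where
  rel : Agent → S → S → Prop
  label : S → Set AP

/-- Derived relation `≈_A`. -/
def KModel.relD {Agent AP S : Type} (M : KModel Agent AP S) (A : Set Agent) (X Y : S) : Prop :=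
  ∀ a ∈ A, M.rel a X Y

/-- The semantics `⟦φ⟧^M_ρ`. -/
def sem {Agent AP S : Type} (M : KModel Agent AP S) (ρ : ℕ → Set S) :
    Formula AP Agent → Set S
  | .atom p   => {X | p ∈ M.label X}
  | .natom p  => {X | p ∉ M.label X}
  | .var Z    => ρ Z
  | .or φ ψ   => sem M ρ φ ∪ sem M ρ ψ
  | .and φ ψ  => sem M ρ φ ∩ sem M ρ ψ
  | .know A φ => {X | ∀ Y, M.relD A Y X → Y ∈ sem M ρ φ}
  | .nu Z φ   => ⋃₀ {T | T ⊆ sem M (Function.update ρ Z T) φ}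

/-- Free propositional variables of a formula. -/
def Formula.freeVars {AP Agent : Type} : Formula AP Agent → Set ℕ
  | .atom _   => ∅
  | .natom _  => ∅
  | .var Z    => {Z}
  | .or φ ψ   => φ.freeVars ∪ ψ.freeVars
  | .and φ ψ  => φ.freeVars ∪ ψ.freeVars
  | .know _ φ => φ.freeVars
  | .nu Z φ   => φ.freeVars \ {Z}

/-- All propositional variables occurring in a formula (free or bound). -/
def Formula.vars {AP Agent : Type} : Formula AP Agent → Set ℕ
  | .atom _   => ∅
  | .natom _  => ∅
  | .var Z    => {Z}
  | .or φ ψ   => φ.vars ∪ ψ.vars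
  | .and φ ψ  => φ.vars ∪ ψ.vars
  | .know _ φ => φ.vars
  | .nu Z φ   => insert Z φ.vars

/-- Satisfaction of a closed formula (under every interpretation). -/
def Models {Agent AP S : Type} (M : KModel Agent AP S) (X : S) (φ : Formula AP Agent) : Prop :=
  ∀ ρ, X ∈ sem M ρ φ

/-- Validity of a closed formula in a model. -/
def ValidIn {Agent AP S : Type} (M : KModel Agent AP S) (φ : Formula AP Agent) : Prop :=
  ∀ X, Models M X φ

/-! ## Simplicial models presented by facet data -/

/-- A (pure chromatic) simplicial model presented by its facets: each state
(facet) `σ` has, for every color `a ∈ Π`, a unique vertex `(a, vert σ a)` with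
value in `V`; `label` gives the atomic propositions true at each facet. -/
structure SModel (n : ℕ) (V AP S : Type) where
  vert : S → Fin (n + 1) → V
  label : S → Set AP

/-- The induced Kripke model: `σ ∼_a τ` iff `σ` and `τ` share their vertex of
color `a` (i.e. `a ∈ χ(σ ∩ τ)`). -/
def SModel.toKModel {n : ℕ} {V AP S : Type} (M : SModel n V AP S) :
    KModel (Fin (n + 1)) AP S where
  rel a σ τ := M.vert σ a = M.vert τ a
  label := M.label

/-- Satisfaction of a closed formula at a state of a simplicial model. -/
def ModelsS {n : ℕ} {V AP S : Type} (M : SModel n V AP S) (σ : S)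
    (φ : Formula AP (Fin (n + 1))) : Prop :=
  ∀ ρ, σ ∈ sem M.toKModel ρ φ

/-- Validity of a closed formula in a simplicial model. -/
def ValidInS {n : ℕ} {V AP S : Type} (M : SModel n V AP S)
    (φ : Formula AP (Fin (n + 1))) : Prop :=
  ∀ σ, ModelsS M σ φ

/-- A morphism of simplicial models: a color-preserving vertex map `vmap`
sending every simplex of the source to a simplex of the target (hence every
facet `σ` to the facet `smap σ`), preserving the labeling. -/
structure SMorphism {n : ℕ} {V V' AP S S' : Type}
    (M : SModel n V AP S) (M' : SModel n V' AP S') where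
  vmap : Fin (n + 1) × V → Fin (n + 1) × V'
  color : ∀ p, (vmap p).1 = p.1
  smap : S → S'
  vert_comm : ∀ σ a, vmap (a, M.vert σ a) = (a, M'.vert (smap σ) a)
  label_eq : ∀ σ, M.label σ = M'.label (smap σ)

/-! ## Ordered set partitions, iterated immediate snapshot views, and the
product update models `I[IS^m]` and `I[SA_k]` -/

/-- An ordered set partition `⟨A₁|A₂|…|A_r⟩` of `Π = Fin (n+1)`. -/
structure OSP (n : ℕ) where
  parts : List (Finset (Fin (n + 1)))
  nonempty : ∀ A ∈ parts, A.Nonempty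
  pairwise_disjoint : parts.Pairwise Disjoint
  cover : ∀ a : Fin (n + 1), ∃ A ∈ parts, a ∈ A

/-- `view*_a(γ) = A₁ ∪ … ∪ A_q` where `a ∈ A_q`: the set of processes seen by
`a` in the snapshot round `γ`. -/
def OSP.viewSet {n : ℕ} (γ : OSP n) (a : Fin (n + 1)) : Finset (Fin (n + 1)) :=
  (γ.parts.take (γ.parts.findIdx (fun A => decide (a ∈ A)) + 1)).foldr (· ∪ ·) ∅

/-- Iterated snapshot views: `base v` is an initial input value, and `snap f`
is the view of a process after a snapshot round, recording (for exactly the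
processes it has seen) their views at the previous round. -/
inductive View (n : ℕ) : Type
  | base : Fin (n + 1) → View n
  | snap : (Fin (n + 1) → Option (View n)) → View n

/-- `iisView X m γ a` is `view_a(X·γ₁·…·γ_m)`, the view of process `a` in the
facet `X·γ₁·…·γ_m` of the `m`-iterated standard chromatic subdivision of the
input facet `X` (where `γ i` is the `(i+1)`-st round's ordered set partition). -/
def iisView {n : ℕ} (X : Fin (n + 1) → Fin (n + 1)) :
    (m : ℕ) → (Fin m → OSP n) → Fin (n + 1) → View n
  | 0, _, a => .base (X a)
  | m + 1, γ, a => .snap (fun b =>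
      if b ∈ (γ (Fin.last m)).viewSet a then
        some (iisView X m (fun i => γ i.castSucc) b)
      else none)

/-- Facets of `I[IS^m]`: an input facet `X ∈ F(I)` (given by the input values
of the `n+1` processes) together with the `m` rounds' ordered set partitions. -/
def IISState (n m : ℕ) : Type := (Fin (n + 1) → Fin (n + 1)) × (Fin m → OSP n)

/-- Atomic propositions with factual change: `Sum.inl (a,v)` is `input_{a,v}`
and `Sum.inr (a,d)` is `decide_{a,d}`. -/
abbrev APfc (n : ℕ) := (Fin (n + 1) × Fin (n + 1)) ⊕ (Fin (n + 1) × Fin (n + 1))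

/-- The product update model `I[IS^m]` of the `m`-round iterated immediate
snapshot protocol (labels mention only inputs). -/
def IISmodel (n m : ℕ) : SModel n (View n) (APfc n) (IISState n m) where
  vert σ a := iisView σ.1 m σ.2 a
  label σ := {p | ∃ a, p = Sum.inl (a, σ.1 a)}

/-- Facets of `I[SA_k]`: a pair of an input assignment and an output
assignment of the `n+1` processes, such that at most `k` values are decided
and every decided value is some process's input. -/
def SAState (n k : ℕ) : Type :=
  {p : (Fin (n + 1) → Fin (n + 1)) × (Fin (n + 1) → Fin (n + 1)) //
    (Finset.univ.image p.2).card ≤ k ∧ Finset.univ.image p.2 ⊆ Finset.univ.image p.1}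

/-- The product update model `I[SA_k]` of the `k`-set agreement task
(labels mention only inputs). -/
def SAmodel (n k : ℕ) : SModel n (Fin (n + 1) × Fin (n + 1)) (APfc n) (SAState n k) where
  vert σ a := (σ.val.1 a, σ.val.2 a)
  label σ := {p | ∃ a, p = Sum.inl (a, σ.val.1 a)}

/-- The factual-change extension `I[SA_k]^fc`: same Kripke frame, labels also
mention the decided values. -/
def SAfc (n k : ℕ) : SModel n (Fin (n + 1) × Fin (n + 1)) (APfc n) (SAState n k) where
  vert σ a := (σ.val.1 a, σ.val.2 a)
  label σ := {p | (∃ a, p = Sum.inl (a, σ.val.1 a)) ∨ ∃ a, p = Sum.inr (a, σ.val.2 a)}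

/-- The factual-change model `I[IS^m]^{fc,δ}` for a morphism
`δ : I[IS^m] → I[SA_k]`: the Kripke frame of `I[IS^m]` with labels pulled
back from `I[SA_k]^fc` along `δ`. -/
def IISfc (n m k : ℕ) (δ : SMorphism (IISmodel n m) (SAmodel n k)) :
    SModel n (View n) (APfc n) (IISState n m) where
  vert σ a := iisView σ.1 m σ.2 a
  label σ := (SAfc n k).label (δ.smap σ)

/-! ## The concrete specification formulas -/

/-- Finite conjunction of a list of formulas (the empty conjunction is the
valid formula `νZ.Z`; all conjunctions used below are over nonempty lists). -/
def conjF {AP Agent : Type} : List (Formula AP Agent) → Formula AP Agent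
  | [] => .nu 0 (.var 0)
  | [φ] => φ
  | φ :: l => .and φ (conjF l)

/-- Finite disjunction of a list of formulas (all disjunctions used below are
over nonempty lists). -/
def disjF {AP Agent : Type} : List (Formula AP Agent) → Formula AP Agent
  | [] => .nu 0 (.var 0)
  | [φ] => φ
  | φ :: l => .or φ (disjF l)

/-- The list of all agents `0,…,n`. -/
def allAgents (n : ℕ) : List (Fin (n + 1)) := List.finRange (n + 1)

/-- All pairs of agents. -/
def agentPairs (n : ℕ) : List (Fin (n + 1) × Fin (n + 1)) :=
  (allAgents n).flatMap (fun i => (allAgents n).map (fun j => (i, j)))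

/-- The list of all nonempty subsets of `Π`. -/
noncomputable def neSubsets (n : ℕ) : List (Finset (Fin (n + 1))) :=
  ((Finset.univ : Finset (Fin (n + 1))).powerset.filter (fun A => A.Nonempty)).toList

/-- `IFUN`: each process has exactly one input value
(`¬(p ∧ q)` is written positively as `¬p ∨ ¬q`). -/
def IFUN (n : ℕ) : Formula (APfc n) (Fin (n + 1)) :=
  conjF ((allAgents n).map (fun a => .and
    (conjF (((agentPairs n).filter (fun p => decide (p.1 ≠ p.2))).map
      (fun p => .or (.natom (Sum.inl (a, p.1))) (.natom (Sum.inl (a, p.2))))))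
    (disjF ((allAgents n).map (fun i => .atom (Sum.inl (a, i)))))))

/-- `OFUN`: each process decides exactly one output value. -/
def OFUN (n : ℕ) : Formula (APfc n) (Fin (n + 1)) :=
  conjF ((allAgents n).map (fun a => .and
    (conjF (((agentPairs n).filter (fun p => decide (p.1 ≠ p.2))).map
      (fun p => .or (.natom (Sum.inr (a, p.1))) (.natom (Sum.inr (a, p.2))))))
    (disjF ((allAgents n).map (fun d => .atom (Sum.inr (a, d)))))))

/-- `VALID`: every decided value is some process's input. -/
def VALIDf (n : ℕ) : Formula (APfc n) (Fin (n + 1)) :=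
  conjF ((allAgents n).map (fun a =>
    conjF ((allAgents n).map (fun d =>
      .or (.natom (Sum.inr (a, d)))
          (disjF ((allAgents n).map (fun b => .atom (Sum.inl (b, d)))))))))

/-- `AGREE_k`: at most `k` different values are decided. -/
noncomputable def AGREEf (n k : ℕ) : Formula (APfc n) (Fin (n + 1)) :=
  disjF ((((Finset.univ : Finset (Fin (n + 1))).powerset.filter
      (fun A => 0 < A.card ∧ A.card ≤ k)).toList).map (fun A =>
    conjF ((allAgents n).map (fun a =>
      disjF (A.toList.map (fun d => .atom (Sum.inr (a, d))))))))

/-- `KNOW`: a decided value is distributed knowledge in any group containing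
the decider. -/
noncomputable def KNOWf (n : ℕ) : Formula (APfc n) (Fin (n + 1)) :=
  conjF ((neSubsets n).map (fun A =>
    conjF (A.toList.map (fun a =>
      conjF ((allAgents n).map (fun d =>
        .or (.natom (Sum.inr (a, d)))
            (.know (↑A) (.atom (Sum.inr (a, d))))))))))

open Fin.NatCast in
/-- `DEC_A = ⋀_{d=0}^{|A|−1} ⋁_{a∈A} decide_{a,d}`. -/
noncomputable def DECf (n : ℕ) (A : Finset (Fin (n + 1))) :
    Formula (APfc n) (Fin (n + 1)) :=
  conjF ((List.range A.card).map (fun d =>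
    disjF (A.toList.map (fun a => .atom (Sum.inr (a, (d : Fin (n + 1))))))))

open Fin.NatCast in
/-- `¬DEC_A` in positive (de Morgan) form. -/
noncomputable def NDECf (n : ℕ) (A : Finset (Fin (n + 1))) :
    Formula (APfc n) (Fin (n + 1)) :=
  disjF ((List.range A.card).map (fun d =>
    conjF (A.toList.map (fun a => .natom (Sum.inr (a, (d : Fin (n + 1))))))))

/-- The unsolvability formula
`Φ_k = νZ.[OFUN ∧ VALID ∧ ⋀_{∅≠A⊆Π}(DEC_A ⇒ D_A(KNOW ∧ AGREE_k ∧ Z))]`. -/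
noncomputable def Phi (n k : ℕ) : Formula (APfc n) (Fin (n + 1)) :=
  .nu 0 (.and (OFUN n) (.and (VALIDf n)
    (conjF ((neSubsets n).map (fun A =>
      .or (NDECf n A)
          (.know (↑A) (.and (KNOWf n) (.and (AGREEf n k) (.var 0)))))))))

/-! ## Restricted-form ordered set partitions and the flip operation -/

open Fin.NatCast in
/-- The trailing singleton parts `⟨d+1|d+2|…|n⟩`. -/
def trailing (n d : ℕ) : List (Finset (Fin (n + 1))) :=
  ((List.finRange (n + 1)).filter (fun i => decide (d < (i : ℕ)))).map (fun i => {i})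

/-- `γ` has the restricted form `⟨A₁|…|A_r|d+1|…|n⟩`, with prefix `l = [A₁,…,A_r]`
an ordered set partition of `[0,d]` followed by the singletons `d+1,…,n`. -/
def RestForm (n d : ℕ) (γ : OSP n) (l : List (Finset (Fin (n + 1)))) : Prop :=
  γ.parts = l ++ trailing n d ∧ ∀ A ∈ l, ∀ a ∈ A, (a : ℕ) ≤ d

/-- `flip_A` on the prefix `[A₁,…,A_r]`, for `A = [0,d] ∖ {b}`:
moves `b` one position later in the ordered set partition. -/
def flipB {n : ℕ} (b : Fin (n + 1)) :
    List (Finset (Fin (n + 1))) → List (Finset (Fin (n + 1)))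
  | [] => []
  | A :: rest =>
    if b ∈ A then
      if 1 < A.card then A.erase b :: {b} :: rest
      else
        match rest with
        | [] => [A]
        | B :: rest' => insert b B :: rest'
    else A :: flipB b rest

/-! ## The input facets `I_d`, the collections `F_d`, and the relation `R^A` -/

open Fin.NatCast in
/-- The input facet `I_d = {(i,i) | i ≤ d} ∪ {(i,d) | d < i}` (as an input
assignment). -/
def Idf (n d : ℕ) : Fin (n + 1) → Fin (n + 1) :=
  fun i => if (i : ℕ) ≤ d then i else (d : Fin (n + 1))

/-- The collection `F_d ⊆ F(I[IS^m])`: facets `I_d·γ₁·…·γ_m` where every `γ_i`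
has the restricted form `⟨A_{i,1}|…|A_{i,r_i}|d+1|…|n⟩`. -/
def Fset (n m d : ℕ) : Set (IISState n m) :=
  {σ | σ.1 = Idf n d ∧ ∀ i, ∃ l, RestForm n d (σ.2 i) l}

/-- The singletons-in-increasing-order partition `⟨0|1|…|n⟩`. -/
def gbar (n : ℕ) : OSP n where
  parts := (List.finRange (n + 1)).map (fun i => {i})
  nonempty := by
    intro A hA
    rcases List.mem_map.mp hA with ⟨i, _, rfl⟩
    exact Finset.singleton_nonempty i
  pairwise_disjoint := by
    rw [List.pairwise_map]
    exact (List.nodup_finRange (n + 1)).imp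
      (fun h => Finset.disjoint_singleton.mpr h)
  cover := by
    intro a
    exact ⟨{a}, List.mem_map.mpr ⟨a, List.mem_finRange a, rfl⟩, Finset.mem_singleton_self a⟩

/-- The relation `R^A` on `⋃_{d=0}^k F_d` (for a morphism
`δ : I[IS^m] → I[SA_k]`): `σ R^A σ'` iff `σ ≈_A σ'`, `σ ≠ σ'`, `A ⊆ [0,|A|]`,
`σ ∈ F_d`, `σ' ∈ F_e` with `d,e ≤ k`, `max d e = |A|`, `|d − e| ≤ 1`, and both
`σ` and `σ'` satisfy `DEC_A` in `I[IS^m]^{fc,δ}`. -/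
noncomputable def Rrel (n m k : ℕ) (δ : SMorphism (IISmodel n m) (SAmodel n k))
    (A : Finset (Fin (n + 1))) (σ σ' : IISState n m) : Prop :=
  (IISmodel n m).toKModel.relD (↑A) σ σ' ∧ σ ≠ σ' ∧
  (∀ a ∈ A, (a : ℕ) ≤ A.card) ∧
  (∃ d e : ℕ, d ≤ k ∧ e ≤ k ∧ σ ∈ Fset n m d ∧ σ' ∈ Fset n m e ∧
    max d e = A.card ∧ d ≤ e + 1 ∧ e ≤ d + 1) ∧
  ModelsS (IISfc n m k δ) σ (DECf n A) ∧ ModelsS (IISfc n m k δ) σ' (DECf n A)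

/-! ## Carrier sets, contention sets, and the k-concurrency model -/

/-- `carrier_a(X·γ₁·γ₂) = ⋃_{b ∈ view*_a(γ₂)} view*_b(γ₁)`. -/
def carrierSet (n : ℕ) (σ : IISState n 2) (a : Fin (n + 1)) : Finset (Fin (n + 1)) :=
  ((σ.2 1).viewSet a).biUnion (σ.2 0).viewSet

/-- The contention sets of a facet of `I[IS^2]`. -/
def ContSets (n : ℕ) (σ : IISState n 2) : Set (Finset (Fin (n + 1))) :=
  {A | ∀ a ∈ A, carrierSet n σ a = A.biUnion (carrierSet n σ)}

/-- The facets of the `k`-concurrency model `R_k`. -/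
def kConcStates (n k : ℕ) : Set (IISState n 2) :=
  {σ | ∀ A ∈ ContSets n σ, A.card ≤ k}

/-- The `k`-concurrency model `R_k`, the simplicial submodel of `I[IS^2]` on
the facets in `kConcStates`. -/
def RModel (n k : ℕ) : SModel n (View n) (APfc n) {σ : IISState n 2 // σ ∈ kConcStates n k} where
  vert σ a := iisView σ.val.1 2 σ.val.2 a
  label σ := {p | ∃ a, p = Sum.inl (a, σ.val.1 a)}

/-! ## Auxiliary lemmas for the validity proof -/

lemma mem_conjF {Agent AP S : Type} {M : KModel Agent AP S} {ρ : ℕ → Set S} {X : S} :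
    ∀ {l : List (Formula AP Agent)}, (∀ φ ∈ l, X ∈ sem M ρ φ) → X ∈ sem M ρ (conjF l)
  | [], _ => by
      refine Set.mem_sUnion.mpr ⟨Set.univ, ?_, trivial⟩
      intro x _
      simp [sem]
  | [φ], h => h φ (by simp)
  | φ :: ψ :: l, h => by
      have h2 := mem_conjF (l := ψ :: l) (fun χ hχ => h χ (List.mem_cons_of_mem _ hχ))
      exact ⟨h φ (by simp), h2⟩

lemma mem_disjF {Agent AP S : Type} {M : KModel Agent AP S} {ρ : ℕ → Set S} {X : S} :
    ∀ {l : List (Formula AP Agent)}, (∃ φ ∈ l, X ∈ sem M ρ φ) → X ∈ sem M ρ (disjF l)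
  | [φ], ⟨ψ, hψ, hX⟩ => by
      simp only [List.mem_singleton] at hψ
      subst hψ; exact hX
  | φ :: ψ :: l, ⟨χ, hχ, hX⟩ => by
      rcases List.mem_cons.mp hχ with rfl | hχ
      · exact Or.inl hX
      · exact Or.inr (mem_disjF ⟨χ, hχ, hX⟩)

lemma SAfc_label_inr {n k : ℕ} {σ : SAState n k} {a d : Fin (n + 1)} :
    (Sum.inr (a, d) : APfc n) ∈ (SAfc n k).toKModel.label σ ↔ σ.val.2 a = d := by
  simp only [SAfc, SModel.toKModel, Set.mem_setOf_eq]
  constructor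
  · rintro (⟨b, h⟩ | ⟨b, h⟩)
    · exact absurd h (by simp)
    · obtain ⟨h1, h2⟩ := Prod.mk.injEq .. ▸ Sum.inr.injEq .. ▸ h
      subst h1; exact h2.symm
  · intro h
    exact Or.inr ⟨a, by rw [h]⟩

lemma SAfc_label_inl {n k : ℕ} {σ : SAState n k} {a v : Fin (n + 1)} :
    (Sum.inl (a, v) : APfc n) ∈ (SAfc n k).toKModel.label σ ↔ σ.val.1 a = v := by
  simp only [SAfc, SModel.toKModel, Set.mem_setOf_eq]
  constructor
  · rintro (⟨b, h⟩ | ⟨b, h⟩)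
    · obtain ⟨h1, h2⟩ := Prod.mk.injEq .. ▸ Sum.inl.injEq .. ▸ h
      subst h1; exact h2.symm
    · exact absurd h (by simp)
  · intro h
    exact Or.inl ⟨a, by rw [h]⟩

/-- Every state of `I[SA_k]^fc` satisfies `OFUN`. -/
lemma sat_OFUN {n k : ℕ} (σ : SAState n k) (ρ : ℕ → Set (SAState n k)) :
    σ ∈ sem (SAfc n k).toKModel ρ (OFUN n) := by
  apply mem_conjF
  intro φ hφ
  rcases List.mem_map.mp hφ with ⟨a, _, rfl⟩
  constructor
  · apply mem_conjF
    intro ψ hψ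
    rcases List.mem_map.mp hψ with ⟨p, hp, rfl⟩
    have hne : p.1 ≠ p.2 := by
      have := (List.mem_filter.mp hp).2
      simpa using this
    by_cases h1 : σ.val.2 a = p.1
    · refine Or.inr ?_
      show ¬ _
      rw [SAfc_label_inr]
      intro h2; exact hne (h1 ▸ h2 ▸ rfl)
    · refine Or.inl ?_
      show ¬ _
      rw [SAfc_label_inr]
      exact h1
  · apply mem_disjF
    refine ⟨.atom (Sum.inr (a, σ.val.2 a)), ?_, ?_⟩
    · exact List.mem_map.mpr ⟨σ.val.2 a, by simp [allAgents], rfl⟩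
    · exact SAfc_label_inr.mpr rfl

/-- Every state of `I[SA_k]^fc` satisfies `VALID`. -/
lemma sat_VALID {n k : ℕ} (σ : SAState n k) (ρ : ℕ → Set (SAState n k)) :
    σ ∈ sem (SAfc n k).toKModel ρ (VALIDf n) := by
  apply mem_conjF
  intro φ hφ
  rcases List.mem_map.mp hφ with ⟨a, _, rfl⟩
  apply mem_conjF
  intro ψ hψ
  rcases List.mem_map.mp hψ with ⟨d, _, rfl⟩
  by_cases h : σ.val.2 a = d
  · refine Or.inr ?_
    have hd : d ∈ Finset.univ.image σ.val.1 := by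
      apply σ.property.2
      exact Finset.mem_image.mpr ⟨a, Finset.mem_univ a, h⟩
    obtain ⟨b, _, hb⟩ := Finset.mem_image.mp hd
    apply mem_disjF
    refine ⟨.atom (Sum.inl (b, d)), ?_, ?_⟩
    · exact List.mem_map.mpr ⟨b, by simp [allAgents], rfl⟩
    · exact SAfc_label_inl.mpr hb
  · refine Or.inl ?_
    show ¬ _
    rw [SAfc_label_inr]
    exact h

/-- Every state of `I[SA_k]^fc` satisfies `AGREE_k`. -/
lemma sat_AGREE {n k : ℕ} (hk1 : 1 ≤ k) (σ : SAState n k) (ρ : ℕ → Set (SAState n k)) :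
    σ ∈ sem (SAfc n k).toKModel ρ (AGREEf n k) := by
  classical
  apply mem_disjF
  set A : Finset (Fin (n + 1)) := Finset.univ.image σ.val.2 with hA
  have hAcard : 0 < A.card ∧ A.card ≤ k := by
    constructor
    · rw [Finset.card_pos]
      exact ⟨σ.val.2 0, Finset.mem_image.mpr ⟨0, Finset.mem_univ 0, rfl⟩⟩
    · exact σ.property.1
  refine ⟨_, List.mem_map.mpr ⟨A, ?_, rfl⟩, ?_⟩
  · rw [Finset.mem_toList, Finset.mem_filter]
    exact ⟨Finset.mem_powerset.mpr (Finset.subset_univ A), hAcard⟩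
  · apply mem_conjF
    intro ψ hψ
    rcases List.mem_map.mp hψ with ⟨a, _, rfl⟩
    apply mem_disjF
    refine ⟨.atom (Sum.inr (a, σ.val.2 a)), ?_, ?_⟩
    · refine List.mem_map.mpr ⟨σ.val.2 a, ?_, rfl⟩
      rw [Finset.mem_toList]
      exact Finset.mem_image.mpr ⟨a, Finset.mem_univ a, rfl⟩
    · exact SAfc_label_inr.mpr rfl

/-- Every state of `I[SA_k]^fc` satisfies `KNOW`. -/
lemma sat_KNOW {n k : ℕ} (σ : SAState n k) (ρ : ℕ → Set (SAState n k)) :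
    σ ∈ sem (SAfc n k).toKModel ρ (KNOWf n) := by
  apply mem_conjF
  intro φ hφ
  rcases List.mem_map.mp hφ with ⟨A, hA, rfl⟩
  apply mem_conjF
  intro ψ hψ
  rcases List.mem_map.mp hψ with ⟨a, ha, rfl⟩
  rw [Finset.mem_toList] at ha
  apply mem_conjF
  intro χ hχ
  rcases List.mem_map.mp hχ with ⟨d, _, rfl⟩
  by_cases h : σ.val.2 a = d
  · refine Or.inr ?_
    intro τ hτ
    have := hτ a (Finset.mem_coe.mpr ha)
    have hvert : (τ.val.1 a, τ.val.2 a) = (σ.val.1 a, σ.val.2 a) := this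
    have h2 : τ.val.2 a = σ.val.2 a := congrArg Prod.snd hvert
    exact SAfc_label_inr.mpr (h2.trans h)
  · refine Or.inl ?_
    show ¬ _
    rw [SAfc_label_inr]
    exact h

/-- **Validity of the unsolvability formula.** For every
`1 ≤ k ≤ n`, the formula
`Φ_k = νZ.[OFUN ∧ VALID ∧ ⋀_{∅≠A⊆Π}(DEC_A ⇒ D_A(KNOW ∧ AGREE_k ∧ Z))]`
is valid in `I[SA_k]^fc`. -/
theorem Phi_valid (n k : ℕ) (hn : 1 ≤ n) (hk1 : 1 ≤ k) (hkn : k ≤ n) :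
    ValidInS (SAfc n k) (Phi n k) := by
  intro σ ρ
  refine Set.mem_sUnion.mpr ⟨Set.univ, ?_, trivial⟩
  intro τ _
  set ρ' := Function.update ρ 0 (Set.univ : Set (SAState n k)) with hρ'
  refine ⟨sat_OFUN τ ρ', sat_VALID τ ρ', ?_⟩
  apply mem_conjF
  intro φ hφ
  rcases List.mem_map.mp hφ with ⟨A, _, rfl⟩
  refine Or.inr ?_
  intro υ _
  refine ⟨sat_KNOW υ ρ', sat_AGREE hk1 υ ρ', ?_⟩
  show υ ∈ ρ' 0
  rw [hρ', Function.update_self]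
  trivial
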